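/- arXiv:2210.01267 — 4 statements merged into one kernel-verified Lean document; each statement's English description precedes it below -/
import Mathlib

section
/- Let q ∈ (1/2,1), λ ∈ (0,1], K ≥ 2 even, and set p(x)=λx+(1-λ)q, y = p(x), g(y) = (q(1-y)+(1-q)y)·(y(1-y))^{K/2-1}. Then dg/dy = (y(1-y))^{K/2-2}·((K/2-1)(2y-1)(q(2y-1)-y) - (2q-1)(1-y)y), and dg/dy < 0 for all y ∈ (1/2, 1). -/
/-! With `K = 2m`, `g` is `u · v^(m-1)` for `u = q(1-y) + (1-q)y` and `v = y(1-y)`, so the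
product and chain rules give `g'`. On `(1/2, 1)` both terms of the bracket are negative:
`q(2y-1) < 2y-1 < y` and `2q - 1 > 0`. -/

theorem hasDerivAt_mixture_mul_zpow (q : ℝ) (n : ℤ) {y : ℝ} (hy : y * (1 - y) ≠ 0) :
    HasDerivAt (fun x => (q * (1 - x) + (1 - q) * x) * (x * (1 - x)) ^ n)
      ((y * (1 - y)) ^ (n - 1) *
        (n * (2 * y - 1) * (q * (2 * y - 1) - y) - (2 * q - 1) * (1 - y) * y)) y := by
  have hu : HasDerivAt (fun x => q * (1 - x) + (1 - q) * x) (q * (-1) + (1 - q) * 1) y :=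
    (((hasDerivAt_id' y).const_sub 1).const_mul q).add ((hasDerivAt_id' y).const_mul (1 - q))
  have hv : HasDerivAt (fun x => x * (1 - x)) (1 * (1 - y) + y * (-1)) y :=
    (hasDerivAt_id' y).mul ((hasDerivAt_id' y).const_sub 1)
  refine (hu.mul ((hasDerivAt_zpow n _ (Or.inl hy)).comp y hv)).congr_deriv ?_
  have hsplit : (y * (1 - y)) ^ n = (y * (1 - y)) ^ (n - 1) * (y * (1 - y)) := by
    rw [← zpow_add_one₀ hy, sub_add_cancel]
  rw [Function.comp_apply, hsplit]
  ring

theorem mixture_deriv_factor_neg {q c y : ℝ} (hq : 1 / 2 < q) (hq1 : q ≤ 1) (hc : 0 ≤ c)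
    (hy : 1 / 2 < y) (hy1 : y < 1) :
    c * (2 * y - 1) * (q * (2 * y - 1) - y) - (2 * q - 1) * (1 - y) * y < 0 := by
  have hbias : q * (2 * y - 1) - y < 0 := by nlinarith
  have hfirst : c * (2 * y - 1) * (q * (2 * y - 1) - y) ≤ 0 :=
    mul_nonpos_of_nonneg_of_nonpos (mul_nonneg hc (by linarith)) hbias.le
  have hsecond : 0 < (2 * q - 1) * (1 - y) * y :=
    mul_pos (mul_pos (by linarith) (by linarith)) (by linarith)
  linarith

theorem stmt2_general (q : ℝ) (K : ℕ)
    (hq : q ∈ Set.Ioo (1/2 : ℝ) 1)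
    (hK : 2 ≤ K) (hKeven : Even K)
    (g g' : ℝ → ℝ)
    (hg : ∀ y, g y = (q * (1 - y) + (1 - q) * y) * (y * (1 - y)) ^ ((K / 2 : ℤ) - 1))
    (hg' : ∀ y, g' y = (y * (1 - y)) ^ ((K / 2 : ℤ) - 2) *
      ((((K : ℝ) / 2 - 1) * (2 * y - 1) * (q * (2 * y - 1) - y))
        - (2 * q - 1) * (1 - y) * y)) :
    (∀ y ∈ Set.Ioo (0:ℝ) 1, HasDerivAt g (g' y) y) ∧
    (∀ y ∈ Set.Ioo (1/2 : ℝ) 1, g' y < 0) := by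
  obtain ⟨m, rfl⟩ := hKeven
  have hexp : ((m + m : ℕ) / 2 : ℤ) - 2 = (m - 1 : ℤ) - 1 := by omega
  have hcoeff : ((m + m : ℕ) : ℝ) / 2 - 1 = ((m - 1 : ℤ) : ℝ) := by push_cast; ring
  have hg'_eq : ∀ y, g' y = (y * (1 - y)) ^ ((m - 1 : ℤ) - 1) *
      (((m - 1 : ℤ) : ℝ) * (2 * y - 1) * (q * (2 * y - 1) - y) - (2 * q - 1) * (1 - y) * y) := by
    intro y
    rw [hg', hexp, hcoeff]
  have hg_eq : g = fun x => (q * (1 - x) + (1 - q) * x) * (x * (1 - x)) ^ (m - 1 : ℤ) := by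
    funext x
    rw [hg]
    congr 2
    omega
  refine ⟨fun y ⟨hy0, hy1⟩ => ?_, fun y ⟨hy0, hy1⟩ => ?_⟩
  · rw [hg_eq, hg'_eq]
    exact hasDerivAt_mixture_mul_zpow q _ (mul_pos hy0 (by linarith)).ne'
  · rw [hg'_eq]
    refine mul_neg_of_pos_of_neg (zpow_pos (mul_pos (by linarith) (by linarith)) _) ?_
    exact mixture_deriv_factor_neg hq.1 hq.2.le (Int.cast_nonneg_iff.mpr (by omega)) hy0 hy1

theorem stmt2 (q lam : ℝ) (K : ℕ)
    (hq : q ∈ Set.Ioo (1/2 : ℝ) 1) (hlam : lam ∈ Set.Ioc (0:ℝ) 1)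
    (hK : 2 ≤ K) (hKeven : Even K)
    (g g' : ℝ → ℝ)
    (hg : ∀ y, g y = (q * (1 - y) + (1 - q) * y) * (y * (1 - y)) ^ ((K / 2 : ℤ) - 1))
    (hg' : ∀ y, g' y = (y * (1 - y)) ^ ((K / 2 : ℤ) - 2) *
      ((((K : ℝ) / 2 - 1) * (2 * y - 1) * (q * (2 * y - 1) - y))
        - (2 * q - 1) * (1 - y) * y)) :
    (∀ y ∈ Set.Ioo (0:ℝ) 1, HasDerivAt g (g' y) y) ∧
    (∀ y ∈ Set.Ioo (1/2 : ℝ) 1, g' y < 0) :=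
  stmt2_general q K hq hK hKeven g g' hg hg'
end

section
/- Let q ∈ (1/2,1), 0 < y ≤ q, K ≥ 1, C ≥ 1 integers with 2C ≤ K. Suppose σ₁: {-1,1} × {0,…,K} → [0,C] satisfies: (i) σ₁(1,k) = C and σ₁(-1,k) ≤ C for all k ≥ K/2; (ii) σ₁(-1,k) = 0 and σ₁(1,k) ≥ 0 for all k < K/2; (iii) σ₁(1,k) + σ₁(-1,K-k) = C for all k < K/2; (iv) σ₁(-1,K) = C. Let P_k = binom(K,k)·y^k·(1-y)^{K-k}. If y > 1/2, then q·∑_{k=0}^K P_k·σ₁(1,k) + (1-q)·∑_{k=0}^K P_k·σ₁(-1,k) > yC. -/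
open Finset

noncomputable def binPMF (J k : ℕ) (p : ℝ) : ℝ :=
  (J.choose k : ℝ) * p ^ k * (1 - p) ^ (J - k)

lemma binPMF_nonneg {y : ℝ} (h0 : 0 ≤ y) (h1 : y ≤ 1) (K k : ℕ) : 0 ≤ binPMF K k y := by
  unfold binPMF
  have h2 : (0:ℝ) ≤ 1 - y := by linarith
  positivity

lemma key_core (c y : ℝ) (hc : 0 ≤ c) (hy2 : 1/2 ≤ y) (hy1 : y ≤ 1) (m d : ℕ) :
    y * (c * y^m * (1-y)^(m+1+d)) ≤ (1-y) * (c * y^(m+1+d) * (1-y)^m) := by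
  have h0 : (0:ℝ) ≤ y := by linarith
  have h0' : (0:ℝ) ≤ 1 - y := by linarith
  have h1 : (1-y)^d ≤ y^d := pow_le_pow_left₀ h0' (by linarith) d
  calc y * (c * y^m * (1-y)^(m+1+d))
      = (c * (y^(m+1) * (1-y)^(m+1))) * (1-y)^d := by ring
    _ ≤ (c * (y^(m+1) * (1-y)^(m+1))) * y^d := by
        apply mul_le_mul_of_nonneg_left h1
        positivity
    _ = (1-y) * (c * y^(m+1+d) * (1-y)^m) := by ring

lemma key {y : ℝ} (hy2 : 1/2 ≤ y) (hy1 : y ≤ 1) {K k : ℕ} (hk : K + 1 ≤ 2*k) (hkK : k ≤ K) :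
    y * binPMF K (K-k) y ≤ (1-y) * binPMF K k y := by
  unfold binPMF
  rw [Nat.choose_symm hkK, Nat.sub_sub_self hkK]
  obtain ⟨m, d, hm, hd⟩ : ∃ m d, K - k = m ∧ k = m + 1 + d := ⟨K - k, k - (K-k+1), rfl, by omega⟩
  rw [hm, hd]
  exact key_core _ y (by positivity) hy2 hy1 m d

theorem stmt6 (q y : ℝ) (K C : ℕ) (σp σm : ℕ → ℝ)
    (hq : q ∈ Set.Ioo (1/2 : ℝ) 1) (hy : 0 < y) (hyq : y ≤ q)
    (hK : 1 ≤ K) (hC : 1 ≤ C) (hCK : 2 * C ≤ K)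
    (hrange : ∀ k ≤ K, 0 ≤ σp k ∧ σp k ≤ C ∧ 0 ≤ σm k ∧ σm k ≤ C)
    (hi : ∀ k ≤ K, K ≤ 2 * k → σp k = C)
    (hii : ∀ k ≤ K, 2 * k < K → σm k = 0)
    (hiii : ∀ k ≤ K, 2 * k < K → σp k + σm (K - k) = C)
    (hiv : σm K = C)
    (hy2 : 1/2 < y) :
    y * (C : ℝ) <
      q * ∑ k ∈ Finset.range (K+1), binPMF K k y * σp k +
      (1 - q) * ∑ k ∈ Finset.range (K+1), binPMF K k y * σm k := by
  obtain ⟨hq1, hq2⟩ := hq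
  have hy1 : y < 1 := lt_of_le_of_lt hyq hq2
  have hK2 : 2 ≤ K := by omega
  set P : ℕ → ℝ := fun k => binPMF K k y with hP
  have hPnn : ∀ k, 0 ≤ P k := fun k => binPMF_nonneg (by linarith) (by linarith) K k
  set f : ℕ → ℝ := fun k => P k * (y * (σp k - (C:ℝ)) + (1-y) * σm k) with hf
  -- sum of P equals 1
  have hsum1 : ∑ k ∈ range (K+1), P k = 1 := by
    have h : ((y + (1-y)) : ℝ)^K = ∑ k ∈ range (K+1), y^k * (1-y)^(K-k) * (K.choose k) :=
      add_pow y (1-y) K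
    have h2 : ((y + (1-y)) : ℝ)^K = 1 := by norm_num
    rw [h2] at h
    have h3 : ∑ k ∈ range (K+1), P k = ∑ k ∈ range (K+1), y^k * (1-y)^(K-k) * (K.choose k) :=
      Finset.sum_congr rfl fun k _ => by simp only [hP, binPMF]; ring
    rw [h3, ← h]
  -- each paired term is nonnegative
  have hpair : ∀ k ∈ range (K+1), 0 ≤ f k + f (K - k) := by
    intro k hk
    have hkK : k ≤ K := by simpa using Nat.lt_succ_iff.mp (mem_range.mp hk)
    rcases lt_trichotomy (2*k) K with h | h | h
    · -- low k
      have e2 : σm k = 0 := hii k hkK (by omega)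
      have e3 : σp (K-k) = (C:ℝ) := hi (K-k) (by omega) (by omega)
      have e1 : σp k = (C:ℝ) - σm (K-k) := by linarith [hiii k hkK (by omega)]
      have hkey : y * P k ≤ (1-y) * P (K-k) := by
        have := key (y := y) (K := K) (k := K - k) (by linarith) (by linarith) (by omega) (by omega)
        rwa [show K - (K-k) = k by omega] at this
      have hσ : 0 ≤ σm (K-k) := (hrange (K-k) (by omega)).2.2.1
      have hprod : 0 ≤ σm (K-k) * ((1-y) * P (K-k) - y * P k) :=
        mul_nonneg hσ (by linarith)
      simp only [hf, e1, e2, e3]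
      nlinarith [hprod]
    · -- middle
      have hkk : K - k = k := by omega
      have e3 : σp k = (C:ℝ) := hi k hkK (by omega)
      have hσ : 0 ≤ σm k := (hrange k hkK).2.2.1
      simp only [hf, hkk, e3]
      nlinarith [mul_nonneg (hPnn k) (mul_nonneg (show (0:ℝ) ≤ 1-y by linarith) hσ)]
    · -- high k
      have e3 : σp k = (C:ℝ) := hi k hkK (by omega)
      have e2 : σm (K-k) = 0 := hii (K-k) (by omega) (by omega)
      have e1 : σp (K-k) = (C:ℝ) - σm k := by
        have := hiii (K-k) (by omega) (by omega)
        rw [show K - (K-k) = k by omega] at this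
        linarith
      have hkey : y * P (K-k) ≤ (1-y) * P k :=
        key (y := y) (by linarith) (by linarith) (by omega) hkK
      have hσ : 0 ≤ σm k := (hrange k hkK).2.2.1
      have hprod : 0 ≤ σm k * ((1-y) * P k - y * P (K-k)) := mul_nonneg hσ (by linarith)
      simp only [hf, e1, e2, e3]
      nlinarith [hprod]
  -- strict positivity at k = K
  have hstrict : 0 < f K + f (K - K) := by
    have e3 : σp K = (C:ℝ) := hi K le_rfl (by omega)
    have e2 : σm 0 = 0 := hii 0 (by omega) (by omega)
    have e1 : σp 0 = 0 := by
      have := hiii 0 (by omega) (by omega)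
      simp only [Nat.sub_zero, hiv] at this
      linarith
    have hPK : P K = y^K := by
      simp [hP, binPMF, Nat.choose_self, Nat.sub_self]
    have hP0 : P 0 = (1-y)^K := by
      simp [hP, binPMF]
    obtain ⟨m, hm⟩ : ∃ m, K = m + 1 := ⟨K - 1, by omega⟩
    have hm1 : m ≠ 0 := by omega
    have hp : (1-y)^m < y^m := pow_lt_pow_left₀ (by linarith) (by linarith) hm1
    have hCpos : (0:ℝ) < (C:ℝ) := by exact_mod_cast Nat.pos_of_ne_zero (by omega)
    have key2 : 0 < (C:ℝ) * ((1-y) * y^K - y * (1-y)^K) := by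
      rw [hm]
      have : (1-y) * y^(m+1) - y * (1-y)^(m+1) = y * (1-y) * (y^m - (1-y)^m) := by ring
      rw [this]
      exact mul_pos hCpos (mul_pos (mul_pos hy (by linarith)) (by linarith))
    simp only [hf, Nat.sub_self, e1, e2, e3, hiv, hPK, hP0]
    nlinarith [key2]
  -- total sum of f is positive
  have hfpos : 0 < ∑ k ∈ range (K+1), f k := by
    have hrefl : ∑ k ∈ range (K+1), f (K - k) = ∑ k ∈ range (K+1), f k := by
      have := Finset.sum_range_reflect f (K+1)
      simpa using this
    have hdouble : ∑ k ∈ range (K+1), (f k + f (K - k)) = 2 * ∑ k ∈ range (K+1), f k := by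
      rw [Finset.sum_add_distrib, hrefl]; ring
    have hpos : 0 < ∑ k ∈ range (K+1), (f k + f (K - k)) := by
      apply Finset.sum_pos' hpair
      exact ⟨K, Finset.self_mem_range_succ K, hstrict⟩
    linarith [hdouble ▸ hpos]
  -- identity for sum of f
  have hid : ∑ k ∈ range (K+1), f k
      = y * (∑ k ∈ range (K+1), P k * σp k) + (1-y) * (∑ k ∈ range (K+1), P k * σm k)
        - y * (C:ℝ) * (∑ k ∈ range (K+1), P k) := by
    rw [Finset.mul_sum, Finset.mul_sum, Finset.mul_sum, ← Finset.sum_add_distrib,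
      ← Finset.sum_sub_distrib]
    exact Finset.sum_congr rfl fun k _ => by simp only [hf]; ring
  rw [hsum1, mul_one] at hid
  -- monotone comparison between σp and σm sums
  have hle : ∑ k ∈ range (K+1), P k * σm k ≤ ∑ k ∈ range (K+1), P k * σp k := by
    apply Finset.sum_le_sum
    intro k hk
    have hkK : k ≤ K := Nat.lt_succ_iff.mp (mem_range.mp hk)
    have : σm k ≤ σp k := by
      rcases lt_or_ge (2*k) K with h | h
      · rw [hii k hkK h]; exact (hrange k hkK).1
      · rw [hi k hkK h]; exact (hrange k hkK).2.2.2
    exact mul_le_mul_of_nonneg_left this (hPnn k)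
  have hprod : 0 ≤ (q - y) * ((∑ k ∈ range (K+1), P k * σp k) - ∑ k ∈ range (K+1), P k * σm k) :=
    mul_nonneg (by linarith) (by linarith)
  nlinarith [hfpos, hid, hprod]
end

section
/- Let q ∈ (1/2,1), K ≥ 1, 1 ≤ C ≤ K/2, λ ∈ [0,1], and let σ be state-symmetric with σ₁(1,k) ≥ σ₁(-1,k) for all k. If x ∈ [0,1] satisfies λx+(1-λ)q = 1/2, then φ_σ(x) ≥ (q + C/2)/(1+C) > 1/2; consequently x is not a fixed point of φ_σ. -/
open Finset

lemma binPMF_half_symm (K k : ℕ) (hk : k ≤ K) :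
    binPMF K (K - k) (1/2) = binPMF K k (1/2) := by
  unfold binPMF
  rw [Nat.choose_symm hk, Nat.sub_sub_self hk]
  ring

lemma binPMF_half_nonneg (K k : ℕ) : 0 ≤ binPMF K k (1/2) := by
  unfold binPMF
  positivity

lemma sum_binPMF_half (K : ℕ) :
    ∑ k ∈ Finset.range (K+1), binPMF K k (1/2) = 1 := by
  have h := add_pow (1/2 : ℝ) (1/2) K
  norm_num at h
  calc ∑ k ∈ Finset.range (K+1), binPMF K k (1/2)
      = ∑ k ∈ Finset.range (K+1), (1/2:ℝ)^k * (1/2)^(K-k) * (K.choose k) := by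
        apply Finset.sum_congr rfl
        intro k _
        unfold binPMF
        norm_num
        ring
    _ = 1 := h.symm

theorem stmt9 (q lam x : ℝ) (K C : ℕ) (σp σm : ℕ → ℝ)
    (hq : q ∈ Set.Ioo (1/2 : ℝ) 1) (hlam : lam ∈ Set.Icc (0:ℝ) 1)
    (hx : x ∈ Set.Icc (0:ℝ) 1)
    (hhalf : lam * x + (1 - lam) * q = 1/2)
    (hK : 1 ≤ K) (hC : 1 ≤ C) (hCK : 2 * C ≤ K)
    (hrange : ∀ k ≤ K, 0 ≤ σp k ∧ σp k ≤ C ∧ 0 ≤ σm k ∧ σm k ≤ C)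
    (hsym : ∀ k ≤ K, σp k + σm (K - k) = C)
    (hmono : ∀ k ≤ K, σm k ≤ σp k)
    (φσ : ℝ → ℝ)
    (hφσ : ∀ z, φσ z = (q + ∑ k ∈ Finset.range (K+1),
        binPMF K k (lam * z + (1 - lam) * q) * (q * σp k + (1 - q) * σm k))
      / (1 + (C : ℝ))) :
    (q + (C : ℝ)/2) / (1 + (C : ℝ)) ≤ φσ x ∧ (1/2 : ℝ) < φσ x ∧ x < φσ x := by
  obtain ⟨hq1, hq2⟩ := hq
  set S : ℝ := ∑ k ∈ Finset.range (K+1),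
      binPMF K k (1/2) * (q * σp k + (1 - q) * σm k) with hS
  have hφx : φσ x = (q + S) / (1 + (C : ℝ)) := by
    rw [hφσ, hhalf]
  -- reflected sum equals S
  have hrefl : S = ∑ k ∈ Finset.range (K+1),
      binPMF K k (1/2) * (q * σp (K - k) + (1 - q) * σm (K - k)) := by
    rw [hS, ← Finset.sum_range_reflect]
    apply Finset.sum_congr rfl
    intro k hk
    have hk' : k ≤ K := Nat.lt_succ_iff.mp (Finset.mem_range.mp hk)
    have : K + 1 - 1 - k = K - k := by omega
    rw [this, binPMF_half_symm K k hk']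
  have hCS : (C : ℝ) ≤ 2 * S := by
    have h2S : 2 * S = ∑ k ∈ Finset.range (K+1),
        binPMF K k (1/2) * ((q * σp k + (1 - q) * σm k)
          + (q * σp (K - k) + (1 - q) * σm (K - k))) := by
      rw [two_mul]
      nth_rewrite 2 [hrefl]
      rw [hS, ← Finset.sum_add_distrib]
      apply Finset.sum_congr rfl
      intro k _
      ring
    calc (C : ℝ) = ∑ k ∈ Finset.range (K+1), binPMF K k (1/2) * (C : ℝ) := by
            rw [← Finset.sum_mul, sum_binPMF_half, one_mul]
      _ ≤ 2 * S := by
          rw [h2S]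
          apply Finset.sum_le_sum
          intro k hk
          have hk' : k ≤ K := Nat.lt_succ_iff.mp (Finset.mem_range.mp hk)
          have hkK : K - k ≤ K := Nat.sub_le K k
          apply mul_le_mul_of_nonneg_left _ (binPMF_half_nonneg K k)
          have h1 : σp k + σm (K - k) = C := hsym k hk'
          have h2 : σp (K - k) + σm k = C := by
            have := hsym (K - k) hkK
            rwa [Nat.sub_sub_self hk'] at this
          have h3 : σm k ≤ σp k := hmono k hk'
          nlinarith [h1, h2, h3]
  have hSC2 : (C : ℝ)/2 ≤ S := by linarith
  have hCpos : (0:ℝ) < 1 + (C : ℝ) := by positivity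
  have h1 : (q + (C : ℝ)/2) / (1 + (C : ℝ)) ≤ φσ x := by
    rw [hφx]
    exact div_le_div_of_nonneg_right (by linarith) hCpos.le
  have hC1 : (1:ℝ) ≤ (C : ℝ) := by exact_mod_cast hC
  have h2 : (1/2 : ℝ) < (q + (C : ℝ)/2) / (1 + (C : ℝ)) := by
    rw [lt_div_iff₀ hCpos]
    linarith
  have h2' : (1/2 : ℝ) < φσ x := lt_of_lt_of_le h2 h1
  refine ⟨h1, h2', ?_⟩
  -- show x ≤ 1/2
  have hlam0 : 0 < lam := by
    rcases lt_or_eq_of_le hlam.1 with h | h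
    · exact h
    · exfalso; rw [← h] at hhalf; simp at hhalf; linarith
  have hxhalf : x ≤ 1/2 := by
    nlinarith [hlam.2, hq1]
  linarith
end

section
/- Let q ∈ (1/2,1), λ ∈ (0,1), K ≥ 1, 1 ≤ C ≤ K/2, and let φ denote the majority-rule inflow accuracy function. Suppose x* ∈ (1/2, 1) is a fixed point of φ at virality weight λ with x* > q, and let λ' ∈ (λ, 1]. Then φ evaluated at x* with virality weight λ' satisfies φ^{λ'}(x*) > x*, and since φ^{λ'}(1) < 1, there exists a fixed point x** ∈ (x*, 1) of φ^{λ'}. (Monotonicity of informative steady states in the virality weight.) -/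
open Finset

/-- Majority-rule inflow accuracy with virality weight `l`, for general parity of `K`. -/
noncomputable def inflowMaj (q : ℝ) (K C : ℕ) (l x : ℝ) : ℝ :=
  (q + (C : ℝ) * ((∑ k ∈ Finset.Icc (K/2 + 1) K, binPMF K k (l * x + (1 - l) * q)) +
    (if Even K then q * binPMF K (K/2) (l * x + (1 - l) * q) else 0))) / (1 + (C : ℝ))

/-!
For `x > q` the sampling accuracy `λ x + (1 - λ) q` grows strictly with `λ`, and the majority
tail is a strictly increasing function of the sampling accuracy: the binomial upper tail
`∑_{k ≥ m} P_k(p)` has derivative `K · P^{(K-1)}_{m-1}(p) > 0` on `(0, 1)`, because the derivatives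
of the Bernstein polynomials telescope, and for even `K` the tie weight `q` makes the tail a convex
combination of two such upper tails. Hence `φ^{λ'}(x*) > φ^λ(x*) = x*`. As the tail is at most `1`
and `q < 1`, also `φ^{λ'}(1) < 1`, and the intermediate value theorem gives a fixed point in
`(x*, 1)`.
-/

open Polynomial

theorem Polynomial.derivative_sum_bernsteinPolynomial_Icc (R : Type*) [CommRing R] {m : ℕ}
    (hm : 1 ≤ m) (K : ℕ) :
    derivative (∑ k ∈ Icc m K, bernsteinPolynomial R K k) =
      K * bernsteinPolynomial R (K - 1) (m - 1) := by
  have hvanish : ∀ j, K ≤ j → (K : R[X]) * bernsteinPolynomial R (K - 1) j = 0 := by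
    intro j hj
    rcases K with _ | K
    · simp
    · rw [Nat.add_sub_cancel, bernsteinPolynomial.eq_zero_of_lt R (by omega), mul_zero]
  rcases lt_or_ge K m with hKm | hmK
  · rw [Icc_eq_empty_of_lt hKm, sum_empty, derivative_zero, hvanish _ (by omega)]
  have hterm : ∀ k ∈ Icc m K, derivative (bernsteinPolynomial R K k) =
      -(K * bernsteinPolynomial R (K - 1) (k + 1 - 1) -
        K * bernsteinPolynomial R (K - 1) (k - 1)) := by
    intro k hk
    obtain ⟨j, rfl⟩ : ∃ j, k = j + 1 := ⟨k - 1, by grind⟩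
    rw [bernsteinPolynomial.derivative_succ, Nat.add_sub_cancel, Nat.add_sub_cancel]
    ring
  rw [derivative_sum, sum_congr rfl hterm, sum_neg_distrib,
    sum_Icc_sub (f := fun k => (K : R[X]) * bernsteinPolynomial R (K - 1) (k - 1)) hmK,
    hvanish _ (by omega)]
  ring

lemma binPMF_eq_eval (K k : ℕ) (p : ℝ) : binPMF K k p = (bernsteinPolynomial ℝ K k).eval p := by
  simp [binPMF, bernsteinPolynomial]

lemma binPMF_nonneg_s16 (K k : ℕ) {p : ℝ} (hp : p ∈ Set.Icc 0 1) : 0 ≤ binPMF K k p := by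
  have : 0 ≤ 1 - p := sub_nonneg.2 hp.2
  have := hp.1
  unfold binPMF
  positivity

lemma binPMF_pos {K k : ℕ} (hk : k ≤ K) {p : ℝ} (hp : p ∈ Set.Ioo 0 1) : 0 < binPMF K k p := by
  have : 0 < 1 - p := sub_pos.2 hp.2
  have := hp.1
  have : (0 : ℝ) < K.choose k := by exact_mod_cast Nat.choose_pos hk
  unfold binPMF
  positivity

noncomputable def binTail (K m : ℕ) (p : ℝ) : ℝ :=
  ∑ k ∈ Icc m K, binPMF K k p

lemma hasDerivAt_binTail {m : ℕ} (hm : 1 ≤ m) (K : ℕ) (p : ℝ) :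
    HasDerivAt (binTail K m) (K * binPMF (K - 1) (m - 1) p) p := by
  have h := (∑ k ∈ Icc m K, bernsteinPolynomial ℝ K k).hasDerivAt p
  rw [derivative_sum_bernsteinPolynomial_Icc ℝ hm, eval_mul, eval_natCast, ← binPMF_eq_eval] at h
  have hfun : binTail K m = fun x => (∑ k ∈ Icc m K, bernsteinPolynomial ℝ K k).eval x :=
    funext fun x => by simp only [binTail, binPMF_eq_eval, eval_finsetSum]
  rwa [hfun]

lemma continuous_binTail (K m : ℕ) : Continuous (binTail K m) := by
  unfold binTail binPMF
  fun_prop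

lemma strictMonoOn_binTail {K m : ℕ} (hm : 1 ≤ m) (hmK : m ≤ K) :
    StrictMonoOn (binTail K m) (Set.Icc 0 1) := by
  refine strictMonoOn_of_deriv_pos (convex_Icc 0 1) (continuous_binTail K m).continuousOn ?_
  intro p hp
  rw [interior_Icc] at hp
  rw [(hasDerivAt_binTail hm K p).deriv]
  have : (0 : ℝ) < K := by exact_mod_cast hm.trans hmK
  exact mul_pos this (binPMF_pos (by omega) hp)

lemma binTail_le_one (K m : ℕ) {p : ℝ} (hp : p ∈ Set.Icc 0 1) : binTail K m p ≤ 1 := by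
  have htotal : ∑ k ∈ range (K + 1), binPMF K k p = 1 := by
    simpa [binPMF_eq_eval, eval_finsetSum] using
      congrArg (eval p) (bernsteinPolynomial.sum ℝ K)
  rw [← htotal]
  refine sum_le_sum_of_subset_of_nonneg (fun k hk => ?_) fun k _ _ => binPMF_nonneg_s16 K k hp
  simp only [mem_Icc, mem_range] at hk ⊢
  omega

noncomputable def majorityTail (q : ℝ) (K : ℕ) (p : ℝ) : ℝ :=
  if Even K then (1 - q) * binTail K (K / 2 + 1) p + q * binTail K (K / 2) p
  else binTail K (K / 2 + 1) p

lemma inflowMaj_eq_majorityTail (q : ℝ) (K C : ℕ) (l x : ℝ) :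
    inflowMaj q K C l x = (q + C * majorityTail q K (l * x + (1 - l) * q)) / (1 + C) := by
  unfold inflowMaj majorityTail
  split_ifs with hK
  · rw [binTail, binTail, ← insert_Icc_add_one_left_eq_Icc (Nat.div_le_self K 2),
      sum_insert (by simp)]
    ring
  · rw [binTail, add_zero]

lemma continuous_majorityTail (q : ℝ) (K : ℕ) : Continuous (majorityTail q K) := by
  have := continuous_binTail K
  unfold majorityTail
  split_ifs <;> fun_prop

lemma strictMonoOn_majorityTail {q : ℝ} (hq : q ∈ Set.Icc 0 1) {K : ℕ} (hK : 1 ≤ K) :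
    StrictMonoOn (majorityTail q K) (Set.Icc 0 1) := by
  have hupper := strictMonoOn_binTail (K := K) (m := K / 2 + 1) (by omega) (by omega)
  intro a ha b hb hab
  unfold majorityTail
  split_ifs with hE
  · have hlower := strictMonoOn_binTail (K := K) (m := K / 2)
      (by rcases hE with ⟨r, hr⟩; omega) (Nat.div_le_self K 2)
    have h1 := hupper ha hb hab
    have h2 := hlower ha hb hab
    rcases hq.2.lt_or_eq with hq1 | rfl
    · nlinarith [hq.1]
    · linarith
  · exact hupper ha hb hab

lemma majorityTail_le_one {q : ℝ} (hq : q ∈ Set.Icc 0 1) (K : ℕ) {p : ℝ}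
    (hp : p ∈ Set.Icc 0 1) : majorityTail q K p ≤ 1 := by
  have h1 := binTail_le_one K (K / 2 + 1) hp
  have h2 := binTail_le_one K (K / 2) hp
  unfold majorityTail
  split_ifs
  · nlinarith [hq.1, hq.2]
  · exact h1

lemma mem_Icc_samplingAccuracy {q l x : ℝ} (hq : q ∈ Set.Icc 0 1) (hl : l ∈ Set.Icc 0 1)
    (hx : x ∈ Set.Icc 0 1) : l * x + (1 - l) * q ∈ Set.Icc (0 : ℝ) 1 :=
  convex_Icc 0 1 hx hq hl.1 (sub_nonneg.2 hl.2) (by ring)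

lemma continuous_inflowMaj (q : ℝ) (K C : ℕ) (l : ℝ) : Continuous (inflowMaj q K C l) := by
  have := continuous_majorityTail q K
  simp only [funext (inflowMaj_eq_majorityTail q K C l)]
  fun_prop

section

variable {q : ℝ} {K C : ℕ}

lemma strictMonoOn_inflowMaj_weight (hq : q ∈ Set.Icc 0 1) (hK : 1 ≤ K) (hC : 1 ≤ C)
    {x : ℝ} (hqx : q < x) (hx : x ≤ 1) :
    StrictMonoOn (fun l => inflowMaj q K C l x) (Set.Icc 0 1) := by
  intro l hl l' hl' hll'
  have hx' : x ∈ Set.Icc 0 1 := ⟨hq.1.trans hqx.le, hx⟩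
  have hacc : l * x + (1 - l) * q < l' * x + (1 - l') * q := by nlinarith
  have htail := strictMonoOn_majorityTail hq hK (mem_Icc_samplingAccuracy hq hl hx')
    (mem_Icc_samplingAccuracy hq hl' hx') hacc
  have hC' : (0 : ℝ) < C := by exact_mod_cast hC
  simp only [inflowMaj_eq_majorityTail]
  gcongr

lemma inflowMaj_lt_one (hq : q ∈ Set.Ico 0 1) {l x : ℝ} (hl : l ∈ Set.Icc 0 1)
    (hx : x ∈ Set.Icc 0 1) : inflowMaj q K C l x < 1 := by
  have hq' : q ∈ Set.Icc 0 1 := ⟨hq.1, hq.2.le⟩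
  have htail := majorityTail_le_one hq' K (mem_Icc_samplingAccuracy hq' hl hx)
  rw [inflowMaj_eq_majorityTail, div_lt_one (by positivity)]
  nlinarith [hq.2, (Nat.cast_nonneg C : (0 : ℝ) ≤ C)]

end

theorem stmt16_general (q lam lam' xstar : ℝ) (K C : ℕ)
    (hq : q ∈ Set.Ioo (1/2 : ℝ) 1) (hlam : lam ∈ Set.Ioo (0:ℝ) 1)
    (hK : 1 ≤ K) (hC : 1 ≤ C)
    (hxstar : xstar ∈ Set.Ioo (1/2 : ℝ) 1) (hxq : q < xstar)
    (hfix : inflowMaj q K C lam xstar = xstar)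
    (hlam' : lam' ∈ Set.Ioc lam 1) :
    xstar < inflowMaj q K C lam' xstar ∧
    inflowMaj q K C lam' 1 < 1 ∧
    ∃ x ∈ Set.Ioo xstar 1, inflowMaj q K C lam' x = x := by
  have hq' : q ∈ Set.Ico 0 1 := ⟨by linarith [hq.1], hq.2⟩
  have hlam'01 : lam' ∈ Set.Icc 0 1 := ⟨hlam.1.le.trans hlam'.1.le, hlam'.2⟩
  have hgrow : xstar < inflowMaj q K C lam' xstar := by
    conv_lhs => rw [← hfix]
    exact strictMonoOn_inflowMaj_weight ⟨hq'.1, hq'.2.le⟩ hK hC hxq hxstar.2.le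
      ⟨hlam.1.le, hlam.2.le⟩ hlam'01 hlam'.1
  have hone : inflowMaj q K C lam' 1 < 1 :=
    inflowMaj_lt_one hq' hlam'01 ⟨zero_le_one, le_rfl⟩
  obtain ⟨x, hx, hfx⟩ := intermediate_value_Ioo' hxstar.2.le
    ((continuous_inflowMaj q K C lam').sub continuous_id).continuousOn
    (show (0 : ℝ) ∈ Set.Ioo _ _ from ⟨by simpa using hone, by simpa using hgrow⟩)
  exact ⟨hgrow, hone, x, hx, sub_eq_zero.1 hfx⟩

theorem stmt16 (q lam lam' xstar : ℝ) (K C : ℕ)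
    (hq : q ∈ Set.Ioo (1/2 : ℝ) 1) (hlam : lam ∈ Set.Ioo (0:ℝ) 1)
    (hK : 1 ≤ K) (hC : 1 ≤ C) (hCK : 2 * C ≤ K)
    (hxstar : xstar ∈ Set.Ioo (1/2 : ℝ) 1) (hxq : q < xstar)
    (hfix : inflowMaj q K C lam xstar = xstar)
    (hlam' : lam' ∈ Set.Ioc lam 1) :
    xstar < inflowMaj q K C lam' xstar ∧
    inflowMaj q K C lam' 1 < 1 ∧
    ∃ x ∈ Set.Ioo xstar 1, inflowMaj q K C lam' x = x :=
  stmt16_general q lam lam' xstar K C hq hlam hK hC hxstar hxq hfix hlam'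
end
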